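/- Let X be a Banach space and let Y be a weak*-closed linear subspace of the dual X*. Suppose there is a directed set Λ and a net (Y_λ)_{λ∈Λ} of weak*-closed subspaces of Y with Y_{λ₁} ⊆ Y_{λ₂} whenever λ₁ ≤ λ₂, such that the union ⋃_{λ∈Λ} Y_λ is norm-dense in Y. Suppose further that each Y_λ is the range of a weak*-continuous bounded linear projection P_λ : X* → X*, that sup_λ ‖P_λ‖ ≤ M for some M < ∞, and that lim_λ sup_{μ ≥ λ} ‖P_λ ∘ P_μ − P_λ‖ = 0. Then there exists a weak*-continuous bounded linear projection P from X* onto Y with ‖P‖ ≤ M. -/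

import Mathlib

/-!
Each weak*-continuous `P λ` is the adjoint of an operator `S λ` on `X`, and the projection is the
adjoint of the pointwise norm limit `T x = lim S λ x`. The oscillation
`p x = limsup_{μ, ν} ‖S μ x - S ν x‖` is a continuous seminorm on `X`, and the hypothesis on
`‖P λ ∘ P μ - P λ‖` says `p (S λ x) ≤ ε_λ ‖x‖` with `ε_λ → 0`. If a functional `f` satisfies
`|f| ≤ p`, it vanishes on the preannihilator of `Y`, hence lies in the weak*-closed `Y`; then
`P λ f → f`, while `‖P λ f‖ = sup_{‖x‖ ≤ 1} |f (S λ x)| ≤ ε_λ → 0`, so `f = 0`. By Hahn–Banach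
`p = 0`, i.e. every net `(S λ x)` is Cauchy.
-/

open NormedSpace Filter Topology

/-- A bounded linear operator on the dual of `X` is weak*-continuous if it is continuous
with respect to the weak* topology on `X*` (in both source and target). -/
def IsWeakStarContinuous {X : Type*} [NormedAddCommGroup X] [NormedSpace ℝ X]
    (T : StrongDual ℝ X →L[ℝ] StrongDual ℝ X) : Prop :=
  Continuous fun φ : WeakDual ℝ X => StrongDual.toWeakDual (T (WeakDual.toStrongDual φ))

section Oscillation

variable {ι E : Type*} [SeminormedAddCommGroup E] {l : Filter ι}

noncomputable def oscillationAlong (l : Filter ι) (u : ι → E) : ℝ :=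
  limsup (fun q : ι × ι => ‖u q.1 - u q.2‖) (l ×ˢ l)

variable {u v : ι → E} {C D : ℝ}

lemma isBoundedUnder_le_norm_sub (hu : ∀ i, ‖u i‖ ≤ C) :
    IsBoundedUnder (· ≤ ·) (l ×ˢ l) fun q : ι × ι => ‖u q.1 - u q.2‖ :=
  isBoundedUnder_of ⟨C + C, fun _ => (norm_sub_le _ _).trans (add_le_add (hu _) (hu _))⟩

variable [l.NeBot]

lemma isCoboundedUnder_le_norm_sub :
    IsCoboundedUnder (· ≤ ·) (l ×ˢ l) fun q : ι × ι => ‖u q.1 - u q.2‖ :=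
  isCoboundedUnder_le_of_le _ fun _ => norm_nonneg _

lemma oscillationAlong_le {b : ℝ} (h : ∀ᶠ q in l ×ˢ l, ‖u q.1 - u q.2‖ ≤ b) :
    oscillationAlong l u ≤ b :=
  limsup_le_of_le isCoboundedUnder_le_norm_sub h

lemma oscillationAlong_const (e : E) : oscillationAlong l (fun _ => e) = 0 := by
  simp [oscillationAlong]

lemma oscillationAlong_add_le (hu : ∀ i, ‖u i‖ ≤ C) (hv : ∀ i, ‖v i‖ ≤ D) :
    oscillationAlong l (u + v) ≤ oscillationAlong l u + oscillationAlong l v := by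
  have hu' := isBoundedUnder_le_norm_sub (l := l) hu
  have hv' := isBoundedUnder_le_norm_sub (l := l) hv
  have hu₀ : IsBoundedUnder (· ≥ ·) (l ×ˢ l) fun q : ι × ι => ‖u q.1 - u q.2‖ :=
    isBoundedUnder_of ⟨0, fun _ => norm_nonneg _⟩
  refine (limsup_le_limsup (Eventually.of_forall fun q => ?_) isCoboundedUnder_le_norm_sub
    (isBoundedUnder_le_add hu' hv')).trans
    (limsup_add_le hu₀ hu' isCoboundedUnder_le_norm_sub hv')
  simpa only [Pi.add_apply, add_sub_add_comm] using norm_add_le _ _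

lemma oscillationAlong_smul {𝕜 : Type*} [NormedField 𝕜] [NormedSpace 𝕜 E]
    (hu : ∀ i, ‖u i‖ ≤ C) (c : 𝕜) :
    oscillationAlong l (c • u) = ‖c‖ * oscillationAlong l u := by
  rw [oscillationAlong, oscillationAlong, Monotone.map_limsup_of_continuousAt
    (monotone_mul_left_of_nonneg (norm_nonneg c)) _ (continuous_const_mul _).continuousAt
    (isBoundedUnder_le_norm_sub hu) isCoboundedUnder_le_norm_sub]
  simp only [Function.comp_def, Pi.smul_apply, ← smul_sub, norm_smul]

lemma cauchy_map_of_oscillationAlong_eq_zero (hu : ∀ i, ‖u i‖ ≤ C)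
    (h : oscillationAlong l u = 0) : Cauchy (map u l) := by
  refine cauchy_map_iff.2 ⟨‹_›, tendsto_uniformity_iff_dist_tendsto_zero.2 ?_⟩
  refine Metric.tendsto_nhds.2 fun ε hε => ?_
  filter_upwards [eventually_lt_of_limsup_lt (h.trans_lt hε) (isBoundedUnder_le_norm_sub hu)]
    with q hq
  rwa [Real.dist_0_eq_abs, abs_of_nonneg dist_nonneg, dist_eq_norm]

end Oscillation

section OscillationSeminorm

variable {ι 𝕜 E F : Type*} [NontriviallyNormedField 𝕜] [SeminormedAddCommGroup E]
  [NormedSpace 𝕜 E] [NormedAddCommGroup F] [NormedSpace 𝕜 F]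
  (l : Filter ι) [l.NeBot] {S : ι → E →L[𝕜] F} {C : ℝ}

noncomputable def oscillationSeminorm (hS : ∀ i, ‖S i‖ ≤ C) : Seminorm 𝕜 E :=
  Seminorm.of (fun x => oscillationAlong l fun i => S i x)
    (fun x y => by
      simpa only [Pi.add_def, map_add] using oscillationAlong_add_le (u := fun i => S i x)
        (v := fun i => S i y) (fun i => (S i).le_of_opNorm_le (hS i) x)
        (fun i => (S i).le_of_opNorm_le (hS i) y))
    (fun c x => by
      simpa only [Pi.smul_def, map_smul] using oscillationAlong_smul (u := fun i => S i x)
        (fun i => (S i).le_of_opNorm_le (hS i) x) c)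

variable {l} (hS : ∀ i, ‖S i‖ ≤ C)

lemma oscillationSeminorm_apply (x : E) :
    oscillationSeminorm l hS x = oscillationAlong l fun i => S i x :=
  rfl

lemma oscillationSeminorm_le (x : E) : oscillationSeminorm l hS x ≤ 2 * C * ‖x‖ := by
  rw [oscillationSeminorm_apply]
  refine oscillationAlong_le <| Eventually.of_forall fun q => ?_
  calc
    ‖S q.1 x - S q.2 x‖ ≤ C * ‖x‖ + C * ‖x‖ := (norm_sub_le _ _).trans
        (add_le_add ((S _).le_of_opNorm_le (hS _) x) ((S _).le_of_opNorm_le (hS _) x))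
    _ = 2 * C * ‖x‖ := by ring

theorem exists_tendsto_of_oscillationSeminorm_eq_zero [CompleteSpace F]
    (h : ∀ x, oscillationSeminorm l hS x = 0) :
    ∃ T : E →L[𝕜] F, (∀ x, Tendsto (fun i => S i x) l (𝓝 (T x))) ∧ ‖T‖ ≤ C := by
  have hlim (x : E) : ∃ y, Tendsto (fun i => S i x) l (𝓝 y) :=
    CompleteSpace.complete <| cauchy_map_of_oscillationAlong_eq_zero
      (fun i => (S i).le_of_opNorm_le (hS i) x) (h x)
  choose T hT using hlim
  have hTC (x : E) : ‖T x‖ ≤ C * ‖x‖ :=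
    le_of_tendsto (hT x).norm (Eventually.of_forall fun i => (S i).le_of_opNorm_le (hS i) x)
  obtain ⟨i⟩ := l.nonempty_of_neBot
  refine ⟨(linearMapOfTendsto T (fun i => (S i : E →ₗ[𝕜] F)) (tendsto_pi_nhds.2 hT)).mkContinuous
    C hTC, hT, LinearMap.mkContinuous_norm_le _ ((norm_nonneg _).trans (hS i)) _⟩

end OscillationSeminorm

theorem Seminorm.exists_strongDual_eq_and_abs_le {E : Type*} [SeminormedAddCommGroup E]
    [NormedSpace ℝ E] (p : Seminorm ℝ E) {C : ℝ} (hp : ∀ x, p x ≤ C * ‖x‖) (x : E) :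
    ∃ f : StrongDual ℝ E, f x = p x ∧ ∀ y, |f y| ≤ p y := by
  let f₀ : E →ₗ.[ℝ] ℝ := LinearPMap.mkSpanSingleton' x (p x) fun c hc => by
    have h := congrArg p hc
    rw [map_smul_eq_mul, map_zero, Real.norm_eq_abs, mul_eq_zero] at h
    rcases h with h | h
    · simp [abs_eq_zero.1 h]
    · simp [h]
  obtain ⟨g, hgf, hgp⟩ := Module.Dual.exists_extension_of_le_seminorm_real (p := p) f₀.domain
    f₀.toFun fun ⟨z, hz⟩ => by
      obtain ⟨c, rfl⟩ := Submodule.mem_span_singleton.1 hz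
      change f₀ ⟨c • x, hz⟩ ≤ p (c • x)
      rw [LinearPMap.mkSpanSingleton'_apply, map_smul_eq_mul, Real.norm_eq_abs, smul_eq_mul,
        RingHom.id_apply]
      exact mul_le_mul_of_nonneg_right (le_abs_self c) (apply_nonneg p x)
  refine ⟨g.mkContinuous C fun y => (hgp y).trans (hp y), ?_, hgp⟩
  have hx : x ∈ f₀.domain := Submodule.mem_span_singleton_self x
  exact (hgf ⟨x, hx⟩).trans (LinearPMap.mkSpanSingleton'_apply_self _ _ _ _)

theorem Submodule.exists_strongDual_ne_zero_of_notMem {E : Type*} [AddCommGroup E] [Module ℝ E]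
    [TopologicalSpace E] [IsTopologicalAddGroup E] [ContinuousSMul ℝ E] [LocallyConvexSpace ℝ E]
    {V : Submodule ℝ E} (hV : IsClosed (V : Set E)) {x : E} (hx : x ∉ V) :
    ∃ f : StrongDual ℝ E, f x ≠ 0 ∧ ∀ v ∈ V, f v = 0 := by
  obtain ⟨f, u, hfx, hfV⟩ := geometric_hahn_banach_point_closed V.convex hV hx
  have hu : u < 0 := by simpa using hfV 0 V.zero_mem
  refine ⟨f, (hfx.trans hu).ne, fun v hv => ?_⟩
  by_contra hfv
  -- otherwise `(u / f v) • v ∈ V` would take the value `u`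
  simpa [hfv] using hfV ((u / f v) • v) (V.smul_mem _ hv)

theorem WeakDual.exists_eq_eval {𝕜 E : Type*} [NontriviallyNormedField 𝕜] [AddCommGroup E]
    [Module 𝕜 E] [TopologicalSpace E] (f : StrongDual 𝕜 (WeakDual 𝕜 E)) :
    ∃ x : E, ∀ φ : WeakDual 𝕜 E, f φ = φ x := by
  obtain ⟨x, rfl⟩ := LinearMap.dualEmbedding_surjective (topDualPairing 𝕜 E) f
  exact ⟨x, fun φ => rfl⟩

section WeakStar

variable {X : Type*} [NormedAddCommGroup X] [NormedSpace ℝ X]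

theorem mem_of_forall_eq_zero_of_isClosed_weakDual {Y : Submodule ℝ (StrongDual ℝ X)}
    (hYc : IsClosed {φ : WeakDual ℝ X | WeakDual.toStrongDual φ ∈ Y}) {φ : StrongDual ℝ X}
    (h : ∀ x : X, (∀ ψ ∈ Y, ψ x = 0) → φ x = 0) : φ ∈ Y := by
  have : LocallyConvexSpace ℝ (WeakDual ℝ X) := WeakBilin.locallyConvexSpace
  by_contra hφ
  obtain ⟨f, hfφ, hfY⟩ := Submodule.exists_strongDual_ne_zero_of_notMem
    (V := Y.comap (WeakDual.toStrongDual (𝕜 := ℝ) (E := X)).toLinearMap) hYc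
    (x := StrongDual.toWeakDual φ) hφ
  obtain ⟨x, hx⟩ := WeakDual.exists_eq_eval f
  exact hfφ ((hx _).trans (h x fun ψ hψ => (hx _).symm.trans (hfY _ hψ)))

theorem norm_le_opNorm_mul_of_forall_apply_eq {T : StrongDual ℝ X →L[ℝ] StrongDual ℝ X}
    {x y : X} (h : ∀ φ, T φ x = φ y) : ‖y‖ ≤ ‖T‖ * ‖x‖ :=
  NormedSpace.norm_le_dual_bound ℝ y (by positivity) fun φ => calc
    ‖φ y‖ = ‖T φ x‖ := by rw [h]
    _ ≤ ‖T‖ * ‖φ‖ * ‖x‖ := (T φ).le_of_opNorm_le (T.le_opNorm φ) x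
    _ = ‖T‖ * ‖x‖ * ‖φ‖ := by ring

end WeakStar

section Preadjoint

variable {X : Type*} [NormedAddCommGroup X] [NormedSpace ℝ X]

def IsPreadjoint (S : X →L[ℝ] X) (T : StrongDual ℝ X →L[ℝ] StrongDual ℝ X) : Prop :=
  ∀ φ x, T φ x = φ (S x)

namespace IsPreadjoint

variable {S S' : X →L[ℝ] X} {T T' : StrongDual ℝ X →L[ℝ] StrongDual ℝ X}

theorem comp (h : IsPreadjoint S T) (h' : IsPreadjoint S' T') :
    IsPreadjoint (S' ∘L S) (T ∘L T') := fun φ x => by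
  simp only [ContinuousLinearMap.comp_apply, h (T' φ) x, h' φ]

theorem sub (h : IsPreadjoint S T) (h' : IsPreadjoint S' T') :
    IsPreadjoint (S - S') (T - T') := fun φ x => by
  simp [h φ x, h' φ x]

theorem opNorm_eq (h : IsPreadjoint S T) : ‖S‖ = ‖T‖ := by
  refine le_antisymm
    (S.opNorm_le_bound (norm_nonneg T) fun x => norm_le_opNorm_mul_of_forall_apply_eq (h · x))
    (T.opNorm_le_bound (norm_nonneg S) fun φ => ?_)
  rw [show T φ = φ ∘L S from ContinuousLinearMap.ext (h φ), mul_comm]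
  exact φ.opNorm_comp_le S

theorem isWeakStarContinuous (h : IsPreadjoint S T) : IsWeakStarContinuous T :=
  WeakDual.continuous_of_continuous_eval fun x =>
    (WeakDual.eval_continuous (S x)).congr fun φ => (h φ x).symm

end IsPreadjoint

theorem IsWeakStarContinuous.exists_isPreadjoint {T : StrongDual ℝ X →L[ℝ] StrongDual ℝ X}
    (hT : IsWeakStarContinuous T) : ∃ S : X →L[ℝ] X, IsPreadjoint S T := by
  have hrep (x : X) : ∃ y : X, ∀ φ : StrongDual ℝ X, T φ x = φ y :=
    WeakDual.exists_eq_eval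
      { toFun := fun φ => T (WeakDual.toStrongDual φ) x
        map_add' := fun φ ψ => by simp
        map_smul' := fun c φ => by simp
        cont := (WeakDual.eval_continuous x).comp hT }
  choose S hS using hrep
  let S' : X →ₗ[ℝ] X :=
    { toFun := S
      map_add' := fun x y => (SeparatingDual.eq_iff_forall_dual_eq (R := ℝ)).2 fun φ => by
        simp only [map_add, ← hS]
      map_smul' := fun c x => (SeparatingDual.eq_iff_forall_dual_eq (R := ℝ)).2 fun φ => by
        simp only [map_smul, ← hS, RingHom.id_apply] }
  exact ⟨S'.mkContinuous ‖T‖ fun x => norm_le_opNorm_mul_of_forall_apply_eq (hS x),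
    fun φ x => hS x φ⟩

theorem isPreadjoint_compL_flip (T : X →L[ℝ] X) :
    IsPreadjoint T ((ContinuousLinearMap.compL ℝ X X ℝ).flip T) :=
  fun _ _ => rfl

end Preadjoint

theorem ContinuousLinearMap.tendsto_apply_of_mem_closure {ι 𝕜 E : Type*}
    [NontriviallyNormedField 𝕜] [SeminormedAddCommGroup E] [NormedSpace 𝕜 E] {l : Filter ι}
    {T : ι → E →L[𝕜] E} {C : ℝ} (hT : ∀ i, ‖T i‖ ≤ C) {D : Set E}
    (hD : ∀ z ∈ D, ∀ᶠ i in l, T i z = z) {y : E} (hy : y ∈ closure D) :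
    Tendsto (fun i => T i y) l (𝓝 y) := by
  have hbdd : ∃ C, ∀ i, ‖T i‖ ≤ C := ⟨C, hT⟩
  have hT : Equicontinuous (DFunLike.coe ∘ T) :=
    ((NormedSpace.equicontinuous_TFAE T).out 5 1).1 hbdd
  refine closure_minimal (fun z hz => ?_) (hT.isClosed_setOfPred_tendsto continuous_id) hy
  exact tendsto_const_nhds.congr' ((hD z hz).mono fun _ h => h.symm)

theorem tendsto_apply_of_mem_closure_iUnion_range {Λ 𝕜 E : Type*} [Preorder Λ]
    [NontriviallyNormedField 𝕜] [SeminormedAddCommGroup E] [NormedSpace 𝕜 E]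
    {P : Λ → E →L[𝕜] E} {C : ℝ} (hPC : ∀ i, ‖P i‖ ≤ C) (hproj : ∀ i, P i ∘L P i = P i)
    (hmono : Monotone fun i => Set.range (P i)) {y : E}
    (hy : y ∈ closure (⋃ i, Set.range (P i))) : Tendsto (fun i => P i y) atTop (𝓝 y) := by
  refine ContinuousLinearMap.tendsto_apply_of_mem_closure hPC (fun z hz => ?_) hy
  obtain ⟨i, hz⟩ := Set.mem_iUnion.1 hz
  filter_upwards [eventually_ge_atTop i] with j hij
  obtain ⟨w, rfl⟩ := hmono hij hz
  exact DFunLike.congr_fun (hproj j) w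

section Projections

variable {X : Type*} [NormedAddCommGroup X] [NormedSpace ℝ X]

theorem oscillationSeminorm_apply_le {Λ : Type*} [Preorder Λ] [IsDirected Λ (· ≤ ·)]
    [Nonempty Λ] {S : Λ → X →L[ℝ] X} {P : Λ → StrongDual ℝ X →L[ℝ] StrongDual ℝ X} {C : ℝ}
    (hSC : ∀ i, ‖S i‖ ≤ C) (hSP : ∀ i, IsPreadjoint (S i) (P i)) {i : Λ} {ε : ℝ}
    (hε : ∀ j ≥ i, ‖P i ∘L P j - P i‖ ≤ ε) (x : X) :
    oscillationSeminorm atTop hSC (S i x) ≤ 2 * ε * ‖x‖ := by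
  have hclose : ∀ j ≥ i, ‖S j (S i x) - S i x‖ ≤ ε * ‖x‖ := fun j hj =>
    (norm_le_opNorm_mul_of_forall_apply_eq (((hSP i).comp (hSP j)).sub (hSP i) · x)).trans
      (mul_le_mul_of_nonneg_right (hε j hj) (norm_nonneg x))
  rw [oscillationSeminorm_apply]
  refine oscillationAlong_le ?_
  filter_upwards [(eventually_ge_atTop i).prod_mk (eventually_ge_atTop i)] with q hq
  calc ‖S q.1 (S i x) - S q.2 (S i x)‖
      ≤ ‖S q.1 (S i x) - S i x‖ + ‖S q.2 (S i x) - S i x‖ := by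
        simpa only [dist_eq_norm] using dist_triangle_right _ _ (S i x)
    _ ≤ ε * ‖x‖ + ε * ‖x‖ := add_le_add (hclose _ hq.1) (hclose _ hq.2)
    _ = 2 * ε * ‖x‖ := by ring

theorem oscillationSeminorm_eq_zero {ι : Type*} {l : Filter ι} [l.NeBot]
    {S : ι → X →L[ℝ] X} {P : ι → StrongDual ℝ X →L[ℝ] StrongDual ℝ X} {C : ℝ}
    (hSC : ∀ i, ‖S i‖ ≤ C) (hSP : ∀ i, IsPreadjoint (S i) (P i))
    {Y : Submodule ℝ (StrongDual ℝ X)}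
    (hYc : IsClosed {φ : WeakDual ℝ X | WeakDual.toStrongDual φ ∈ Y})
    (hPY : ∀ i φ, P i φ ∈ Y) (hPfix : ∀ y ∈ Y, Tendsto (fun i => P i y) l (𝓝 y))
    (hosc : ∀ ε > 0, ∀ᶠ i in l, ∀ x, oscillationSeminorm l hSC (S i x) ≤ ε * ‖x‖) (x : X) :
    oscillationSeminorm l hSC x = 0 := by
  obtain ⟨f, hfx, hfp⟩ := (oscillationSeminorm l hSC).exists_strongDual_eq_and_abs_le
    (oscillationSeminorm_le hSC) x
  have hfY : f ∈ Y := by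
    refine mem_of_forall_eq_zero_of_isClosed_weakDual hYc fun z hz => ?_
    have hSz (i : ι) : S i z = 0 :=
      SeparatingDual.eq_zero_of_forall_dual_eq_zero (R := ℝ) fun φ =>
        (hSP i φ z).symm.trans (hz _ (hPY i φ))
    have hpz : oscillationSeminorm l hSC z = 0 := by
      simp only [oscillationSeminorm_apply, hSz, oscillationAlong_const]
    exact abs_nonpos_iff.1 ((hfp z).trans hpz.le)
  have hPf : Tendsto (fun i => P i f) l (𝓝 0) := by
    refine tendsto_zero_iff_norm_tendsto_zero.2 <| Metric.tendsto_nhds.2 fun ε hε => ?_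
    filter_upwards [hosc (ε / 2) (half_pos hε)] with i hi
    have hPi : ‖P i f‖ ≤ ε / 2 := (P i f).opNorm_le_bound (half_pos hε).le fun y => by
      rw [hSP i f y, Real.norm_eq_abs]
      exact (hfp _).trans (hi y)
    rw [Real.dist_0_eq_abs, abs_norm]
    exact hPi.trans_lt (half_lt_self hε)
  rw [← hfx, tendsto_nhds_unique (hPfix f hfY) hPf]
  rfl

theorem exists_projection_of_tendsto_preadjoint {ι : Type*} {l : Filter ι} [l.NeBot]
    {S : ι → X →L[ℝ] X} {P : ι → StrongDual ℝ X →L[ℝ] StrongDual ℝ X}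
    (hSP : ∀ i, IsPreadjoint (S i) (P i)) {Y : Submodule ℝ (StrongDual ℝ X)}
    (hYc : IsClosed {φ : WeakDual ℝ X | WeakDual.toStrongDual φ ∈ Y})
    (hPY : ∀ i φ, P i φ ∈ Y) (hPfix : ∀ y ∈ Y, Tendsto (fun i => P i y) l (𝓝 y))
    {T : X →L[ℝ] X} (hT : ∀ x, Tendsto (fun i => S i x) l (𝓝 (T x))) :
    ∃ Q : StrongDual ℝ X →L[ℝ] StrongDual ℝ X,
      Q ∘L Q = Q ∧ Set.range Q = (Y : Set (StrongDual ℝ X)) ∧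
      IsWeakStarContinuous Q ∧ ‖Q‖ ≤ ‖T‖ := by
  set Q := (ContinuousLinearMap.compL ℝ X X ℝ).flip T
  have hQY (φ : StrongDual ℝ X) : Q φ ∈ Y := by
    have hweak : Tendsto (fun i => StrongDual.toWeakDual (P i φ)) l
        (𝓝 (StrongDual.toWeakDual (Q φ))) :=
      tendsto_iff_forall_eval_tendsto_topDualPairing.2 fun x =>
        ((φ.continuous.tendsto _).comp (hT x)).congr fun i => (hSP i φ x).symm
    exact hYc.mem_of_tendsto hweak (Eventually.of_forall fun i => hPY i φ)
  have hQfix (y : StrongDual ℝ X) (hy : y ∈ Y) : Q y = y := by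
    ext x
    refine tendsto_nhds_unique ((y.continuous.tendsto _).comp (hT x)) ?_
    exact (((ContinuousLinearMap.apply ℝ ℝ x).continuous.tendsto y).comp (hPfix y hy)).congr
      fun i => hSP i y x
  refine ⟨Q, ContinuousLinearMap.ext fun φ => hQfix _ (hQY φ),
    (Set.range_subset_iff.2 hQY).antisymm fun y hy => ⟨y, hQfix y hy⟩,
    (isPreadjoint_compL_flip T).isWeakStarContinuous, (isPreadjoint_compL_flip T).opNorm_eq.ge⟩

end Projections

theorem stmt_0_general {X : Type*} [NormedAddCommGroup X] [NormedSpace ℝ X] [CompleteSpace X]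
    {Λ : Type*} [Preorder Λ] [IsDirected Λ (· ≤ ·)] [Nonempty Λ]
    (Y : Submodule ℝ (StrongDual ℝ X))
    (hYc : IsClosed {φ : WeakDual ℝ X | WeakDual.toStrongDual φ ∈ Y})
    (Yl : Λ → Submodule ℝ (StrongDual ℝ X))
    (hYlY : ∀ lam, Yl lam ≤ Y)
    (hmono : ∀ lam₁ lam₂, lam₁ ≤ lam₂ → Yl lam₁ ≤ Yl lam₂)
    (hdense : (Y : Set (StrongDual ℝ X)) ⊆ closure (⋃ lam, (Yl lam : Set (StrongDual ℝ X))))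
    (P : Λ → StrongDual ℝ X →L[ℝ] StrongDual ℝ X)
    (hproj : ∀ lam, (P lam) ∘L (P lam) = P lam)
    (hrange : ∀ lam, Set.range (P lam) = (Yl lam : Set (StrongDual ℝ X)))
    (hwcont : ∀ lam, IsWeakStarContinuous (P lam))
    (M : ℝ) (hM : ∀ lam, ‖P lam‖ ≤ M)
    (hlim : ∀ ε > (0 : ℝ), ∃ lam₀ : Λ, ∀ lam ≥ lam₀, ∀ μ ≥ lam,
      ‖(P lam) ∘L (P μ) - P lam‖ ≤ ε) :
    ∃ Q : StrongDual ℝ X →L[ℝ] StrongDual ℝ X,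
      Q ∘L Q = Q ∧ Set.range Q = (Y : Set (StrongDual ℝ X)) ∧
      IsWeakStarContinuous Q ∧ ‖Q‖ ≤ M := by
  choose S hSP using fun lam => (hwcont lam).exists_isPreadjoint
  have hSM (lam : Λ) : ‖S lam‖ ≤ M := (hSP lam).opNorm_eq.trans_le (hM lam)
  have hPY (lam : Λ) (φ : StrongDual ℝ X) : P lam φ ∈ Y :=
    hYlY lam (hrange lam ▸ Set.mem_range_self φ : P lam φ ∈ (Yl lam : Set _))
  have hPfix (y : StrongDual ℝ X) (hy : y ∈ Y) : Tendsto (fun lam => P lam y) atTop (𝓝 y) := by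
    refine tendsto_apply_of_mem_closure_iUnion_range hM hproj (fun i j hij => ?_) ?_
    · simpa only [hrange, SetLike.coe_subset_coe] using hmono i j hij
    · simpa only [hrange] using hdense hy
  have hosc (ε : ℝ) (hε : 0 < ε) :
      ∀ᶠ lam in atTop, ∀ x, oscillationSeminorm atTop hSM (S lam x) ≤ ε * ‖x‖ := by
    obtain ⟨lam₁, h⟩ := hlim (ε / 2) (half_pos hε)
    filter_upwards [eventually_ge_atTop lam₁] with lam hlam x
    exact (oscillationSeminorm_apply_le hSM hSP (h lam hlam) x).trans_eq (by ring)
  obtain ⟨T, hT, hTM⟩ := exists_tendsto_of_oscillationSeminorm_eq_zero hSM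
    (oscillationSeminorm_eq_zero hSM hSP hYc hPY hPfix hosc)
  obtain ⟨Q, hQ, hQY, hQw, hQT⟩ := exists_projection_of_tendsto_preadjoint hSP hYc hPY hPfix hT
  exact ⟨Q, hQ, hQY, hQw, hQT.trans hTM⟩

theorem stmt_0 {X : Type*} [NormedAddCommGroup X] [NormedSpace ℝ X] [CompleteSpace X]
    {Λ : Type*} [Preorder Λ] [IsDirected Λ (· ≤ ·)] [Nonempty Λ]
    (Y : Submodule ℝ (StrongDual ℝ X))
    (hYc : IsClosed {φ : WeakDual ℝ X | WeakDual.toStrongDual φ ∈ Y})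
    (Yl : Λ → Submodule ℝ (StrongDual ℝ X))
    (hYlY : ∀ lam, Yl lam ≤ Y)
    (hYlc : ∀ lam, IsClosed {φ : WeakDual ℝ X | WeakDual.toStrongDual φ ∈ Yl lam})
    (hmono : ∀ lam₁ lam₂, lam₁ ≤ lam₂ → Yl lam₁ ≤ Yl lam₂)
    (hdense : (Y : Set (StrongDual ℝ X)) ⊆ closure (⋃ lam, (Yl lam : Set (StrongDual ℝ X))))
    (P : Λ → StrongDual ℝ X →L[ℝ] StrongDual ℝ X)
    (hproj : ∀ lam, (P lam) ∘L (P lam) = P lam)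
    (hrange : ∀ lam, Set.range (P lam) = (Yl lam : Set (StrongDual ℝ X)))
    (hwcont : ∀ lam, IsWeakStarContinuous (P lam))
    (M : ℝ) (hM : ∀ lam, ‖P lam‖ ≤ M)
    (hlim : ∀ ε > (0 : ℝ), ∃ lam₀ : Λ, ∀ lam ≥ lam₀, ∀ μ ≥ lam,
      ‖(P lam) ∘L (P μ) - P lam‖ ≤ ε) :
    ∃ Q : StrongDual ℝ X →L[ℝ] StrongDual ℝ X,
      Q ∘L Q = Q ∧ Set.range Q = (Y : Set (StrongDual ℝ X)) ∧
      IsWeakStarContinuous Q ∧ ‖Q‖ ≤ M :=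
  stmt_0_general Y hYc Yl hYlY hmono hdense P hproj hrange hwcont M hM hlim
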